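/- arXiv:1605.02728 — 2 statements merged into one kernel-verified Lean document; each statement's English description precedes it below -/
import Mathlib

section
/- For 0 < q < 1 and all complex z, A_{q²}(-z²/q) = (z;q)_∞ ∑_{n=0}^∞ q^{n(n-1)/2} z^n / ((q;q)_n (z;q)_n), where A_q(w) = ∑_{k=0}^∞ q^{k²}(-w)^k/(q;q)_k, provided z is not of the form q^{-m} for a nonnegative integer m. -/
noncomputable def qpC (q a : ℂ) (n : ℕ) : ℂ := ∏ k ∈ Finset.range n, (1 - a * q ^ k)

noncomputable def qpiC (q a : ℂ) : ℂ := ∏' k : ℕ, (1 - a * q ^ k)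

noncomputable def Aq (q : ℝ) (z : ℂ) : ℂ :=
  ∑' k : ℕ, (q : ℂ) ^ (k ^ 2) * (-z) ^ k / qpC (q : ℂ) (q : ℂ) k

/-!
Put `(z; q)_∞` inside the sum using `(z; q)_∞ = (z; q)ₙ (z qⁿ; q)_∞`. As functions of `w`, the
resulting series `G(w) = ∑ₙ q^(n(n-1)/2) wⁿ (w qⁿ; q)_∞ / (q; q)ₙ` and `B(w) = A_{q²}(-w²/q)` both
satisfy the `q`-difference equation `F(w) = F(q w) + q w² F(q² w)` (by telescoping), and both are
`1 + O(w)` at `0`. For the difference `D = G - B`, a bound `‖D(w)‖ ≤ c ‖w‖` on a small disc of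
radius `ρ` feeds back through the equation to `‖D(w)‖ ≤ c (‖q‖ + ρ²) ‖w‖`, so `D` vanishes on the
disc, and the equation spreads this to all of `ℂ`.
-/

open Filter Topology Asymptotics

section QPochhammer

variable {q : ℂ}

lemma qpC_succ (q a : ℂ) (n : ℕ) : qpC q a (n + 1) = qpC q a n * (1 - a * q ^ n) :=
  Finset.prod_range_succ _ _

lemma qpC_ne_zero {a : ℂ} (ha : ∀ k, a * q ^ k ≠ 1) (n : ℕ) : qpC q a n ≠ 0 :=
  Finset.prod_ne_zero_iff.2 fun k _ => sub_ne_zero.2 (ha k).symm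

lemma summable_norm_mul_pow (hq : ‖q‖ < 1) (a : ℂ) : Summable fun k : ℕ => ‖a * q ^ k‖ := by
  simpa only [norm_mul, norm_pow] using
    (summable_geometric_of_lt_one (norm_nonneg q) hq).mul_left ‖a‖

lemma sum_range_norm_mul_pow_le (hq : ‖q‖ < 1) (a : ℂ) (n : ℕ) :
    ∑ k ∈ Finset.range n, ‖a * q ^ k‖ ≤ ‖a‖ / (1 - ‖q‖) := by
  have h := (summable_norm_mul_pow hq a).sum_le_tsum (Finset.range n) fun k _ => norm_nonneg _
  simp only [norm_mul, norm_pow, tsum_mul_left,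
    tsum_geometric_of_lt_one (norm_nonneg q) hq] at h
  simpa only [norm_mul, norm_pow, div_eq_mul_inv] using h

lemma multipliable_one_sub_mul_pow (hq : ‖q‖ < 1) (a : ℂ) :
    Multipliable fun k : ℕ => 1 - a * q ^ k := by
  simpa only [sub_eq_add_neg] using
    multipliable_one_add_of_summable (f := fun k : ℕ => -(a * q ^ k))
      (by simpa only [norm_neg] using summable_norm_mul_pow hq a)

lemma tendsto_qpC (hq : ‖q‖ < 1) (a : ℂ) : Tendsto (qpC q a) atTop (𝓝 (qpiC q a)) :=
  (multipliable_one_sub_mul_pow hq a).hasProd.tendsto_prod_nat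

lemma qpiC_eq_mul (hq : ‖q‖ < 1) (a : ℂ) : qpiC q a = (1 - a) * qpiC q (a * q) := by
  have hshift : Multipliable fun k : ℕ => 1 - a * q ^ (k + 1) :=
    (multipliable_one_sub_mul_pow hq (a * q)).congr fun k => by ring
  rw [qpiC, tprod_eq_zero_mul' (f := fun k => 1 - a * q ^ k) hshift, pow_zero, mul_one, qpiC]
  congr 1
  exact tprod_congr fun k => by rw [pow_succ', mul_assoc]

lemma qpiC_eq_qpC_mul (hq : ‖q‖ < 1) (a : ℂ) (n : ℕ) :
    qpiC q a = qpC q a n * qpiC q (a * q ^ n) := by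
  induction n with
  | zero => simp [qpC]
  | succ n ih => rw [ih, qpiC_eq_mul hq, qpC_succ, pow_succ, mul_assoc a, mul_assoc]

lemma norm_qpC_sub_one_le (hq : ‖q‖ < 1) (a : ℂ) (n : ℕ) :
    ‖qpC q a n - 1‖ ≤ Real.exp (‖a‖ / (1 - ‖q‖)) - 1 := by
  have h := Finset.norm_prod_one_add_sub_one_le (Finset.range n) fun k => -(a * q ^ k)
  simp only [← sub_eq_add_neg, norm_neg] at h
  exact h.trans (by gcongr; exact sum_range_norm_mul_pow_le hq a n)

lemma norm_qpiC_sub_one_le (hq : ‖q‖ < 1) (a : ℂ) :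
    ‖qpiC q a - 1‖ ≤ Real.exp (‖a‖ / (1 - ‖q‖)) - 1 :=
  le_of_tendsto ((tendsto_qpC hq a).sub_const 1).norm
    (Eventually.of_forall (norm_qpC_sub_one_le hq a))

lemma norm_qpiC_le (hq : ‖q‖ < 1) (a : ℂ) : ‖qpiC q a‖ ≤ Real.exp (‖a‖ / (1 - ‖q‖)) := by
  have := norm_le_norm_sub_add (qpiC q a) 1
  linarith [norm_qpiC_sub_one_le hq a, norm_one (α := ℂ)]

lemma isBigO_qpiC_sub_one (hq : ‖q‖ < 1) : (fun a => qpiC q a - 1) =O[𝓝 0] fun a => a := by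
  have h1q : 0 < 1 - ‖q‖ := by linarith
  refine IsBigO.of_bound (2 / (1 - ‖q‖)) ?_
  filter_upwards [Metric.closedBall_mem_nhds (0 : ℂ) h1q] with a ha
  rw [mem_closedBall_zero_iff] at ha
  have hx : |‖a‖ / (1 - ‖q‖)| ≤ 1 := by
    rw [abs_of_nonneg (by positivity), div_le_one h1q]; exact ha
  calc ‖qpiC q a - 1‖ ≤ Real.exp (‖a‖ / (1 - ‖q‖)) - 1 := norm_qpiC_sub_one_le hq a
    _ ≤ 2 * |‖a‖ / (1 - ‖q‖)| := le_of_abs_le (Real.abs_exp_sub_one_le hx)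
    _ = 2 / (1 - ‖q‖) * ‖a‖ := by rw [abs_of_nonneg (by positivity)]; ring

lemma pow_le_norm_qpC_self (hq : ‖q‖ < 1) (n : ℕ) : (1 - ‖q‖) ^ n ≤ ‖qpC q q n‖ := by
  rw [qpC, norm_prod, ← Finset.card_range n, ← Finset.prod_const, Finset.card_range]
  refine Finset.prod_le_prod (fun _ _ => by linarith) fun k _ => ?_
  calc 1 - ‖q‖ ≤ 1 - ‖q * q ^ k‖ := by
        rw [← pow_succ', norm_pow]
        gcongr
        exact pow_le_of_le_one (norm_nonneg q) hq.le k.succ_ne_zero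
    _ ≤ ‖1 - q * q ^ k‖ := by simpa using norm_sub_norm_le (1 : ℂ) (q * q ^ k)

lemma qpC_self_ne_zero (hq : ‖q‖ < 1) (n : ℕ) : qpC q q n ≠ 0 :=
  norm_pos_iff.1 <| (pow_pos (by linarith) n).trans_le (pow_le_norm_qpC_self hq n)

end QPochhammer

lemma summable_pow_mul_pow_triangle {ρ : ℝ} (hρ0 : 0 ≤ ρ) (hρ1 : ρ < 1) (R : ℝ) :
    Summable fun n : ℕ => R ^ n * ρ ^ (n * (n - 1) / 2) := by
  refine summable_of_ratio_norm_eventually_le (r := 1 / 2) (by norm_num) ?_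
  have ht : Tendsto (fun n : ℕ => ‖R‖ * ρ ^ n) atTop (𝓝 0) := by
    simpa using (tendsto_pow_atTop_nhds_zero_of_lt_one hρ0 hρ1).const_mul ‖R‖
  filter_upwards [ht.eventually_le_const (by norm_num : (0 : ℝ) < 1 / 2)] with n hn
  rw [Nat.triangle_succ, pow_succ, pow_add]
  calc ‖R ^ n * R * (ρ ^ (n * (n - 1) / 2) * ρ ^ n)‖
      = ‖R‖ * ρ ^ n * ‖R ^ n * ρ ^ (n * (n - 1) / 2)‖ := by
        simp only [norm_mul, norm_pow, Real.norm_of_nonneg hρ0]; ring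
    _ ≤ 1 / 2 * ‖R ^ n * ρ ^ (n * (n - 1) / 2)‖ := by gcongr

lemma hasSum_sub_succ {E : Type*} [AddCommGroup E] [TopologicalSpace E] [IsTopologicalAddGroup E]
    [T2Space E] {a : ℕ → E} (hs : Summable fun n => a n - a (n + 1))
    (ha : Tendsto a atTop (𝓝 0)) : HasSum (fun n => a n - a (n + 1)) (a 0) := by
  refine hs.hasSum_iff_tendsto_nat.2 ?_
  simp_rw [Finset.sum_range_sub']
  simpa using ha.const_sub (a 0)

lemma tsum_eq_tsum_add_mul_tsum_of_telescoping {f₁ f₂ f₃ a : ℕ → ℂ} {c : ℂ}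
    (h₁ : Summable f₁) (h₂ : Summable f₂) (h₃ : Summable f₃)
    (h : ∀ n, f₁ n - f₂ n - c * f₃ n = a n - a (n + 1))
    (ha0 : a 0 = 0) (ha : Tendsto a atTop (𝓝 0)) :
    ∑' n, f₁ n = ∑' n, f₂ n + c * ∑' n, f₃ n := by
  have hsum : HasSum (fun n => a n - a (n + 1)) (∑' n, f₁ n - ∑' n, f₂ n - c * ∑' n, f₃ n) := by
    simpa only [h] using (h₁.hasSum.sub h₂.hasSum).sub (h₃.hasSum.mul_left c)
  have := (hasSum_sub_succ hsum.summable ha).unique hsum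
  rw [ha0] at this
  linear_combination -this

lemma isBigO_tsum_sub_term_zero {E F : Type*} [SeminormedAddCommGroup E] [NormedAddCommGroup F]
    {f : E → ℕ → F} {C R ρ : ℝ} (hC : 0 ≤ C) (hR : 0 ≤ R) (hρ0 : 0 ≤ ρ) (hρ1 : ρ < 1)
    (hf : ∀ w, Summable (f w))
    (hbound : ∀ᶠ w in 𝓝 0, ∀ n, ‖f w n‖ ≤ C * ((‖w‖ * R) ^ n * ρ ^ (n * (n - 1) / 2))) :
    (fun w => ∑' n, f w n - f w 0) =O[𝓝 0] fun w => w := by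
  set K : ℕ → ℝ := fun n => C * (R ^ (n + 1) * ρ ^ ((n + 1) * (n + 1 - 1) / 2))
  have hK : Summable K :=
    ((summable_nat_add_iff 1).2 (summable_pow_mul_pow_triangle hρ0 hρ1 R)).mul_left C
  refine IsBigO.of_bound (∑' n, K n) ?_
  filter_upwards [hbound, Metric.closedBall_mem_nhds (0 : E) one_pos] with w hw hw1
  rw [mem_closedBall_zero_iff] at hw1
  rw [(hf w).tsum_eq_zero_add, add_sub_cancel_left, ← tsum_mul_right]
  refine tsum_of_norm_bounded (hK.mul_right ‖w‖).hasSum fun n => (hw (n + 1)).trans ?_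
  have hpow : ‖w‖ ^ (n + 1) ≤ ‖w‖ := pow_le_of_le_one (norm_nonneg w) hw1 n.succ_ne_zero
  calc C * ((‖w‖ * R) ^ (n + 1) * ρ ^ ((n + 1) * (n + 1 - 1) / 2))
      = C * (R ^ (n + 1) * ρ ^ ((n + 1) * (n + 1 - 1) / 2)) * ‖w‖ ^ (n + 1) := by ring
    _ ≤ K n * ‖w‖ := by gcongr

section FunctionalEquation

variable {q : ℂ} {D : ℂ → ℂ}

lemma eq_zero_of_norm_le_of_functional_eq
    (hD : ∀ w, D w = D (q * w) + q * w ^ 2 * D (q ^ 2 * w)) {c ρ : ℝ} (hc : 0 ≤ c)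
    (hθ : ‖q‖ + ρ ^ 2 < 1) (hsmall : ∀ w, ‖w‖ ≤ ρ → ‖D w‖ ≤ c * ‖w‖) {w : ℂ} (hw : ‖w‖ ≤ ρ) :
    D w = 0 := by
  have hq : ‖q‖ ≤ 1 := by nlinarith [sq_nonneg ρ]
  set θ := ‖q‖ + ρ ^ 2
  have hshrink : ∀ m (v : ℂ), ‖v‖ ≤ ρ → ‖q ^ m * v‖ ≤ ρ := fun m v hv => by
    rw [norm_mul, norm_pow]
    exact (mul_le_of_le_one_left (norm_nonneg v) (pow_le_one₀ (norm_nonneg q) hq)).trans hv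
  have key : ∀ n : ℕ, ∀ v : ℂ, ‖v‖ ≤ ρ → ‖D v‖ ≤ c * θ ^ n * ‖v‖ := by
    intro n
    induction n with
    | zero => simpa using hsmall
    | succ n ih =>
      intro v hv
      have h1 := ih (q * v) (by simpa using hshrink 1 v hv)
      have h2 := ih (q ^ 2 * v) (hshrink 2 v hv)
      rw [norm_mul] at h1
      rw [norm_mul, norm_pow] at h2
      have hX : 0 ≤ c * θ ^ n * ‖v‖ := by positivity
      have hq3 : ‖q‖ ^ 3 ≤ 1 := pow_le_one₀ (norm_nonneg q) hq
      rw [hD v]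
      calc ‖D (q * v) + q * v ^ 2 * D (q ^ 2 * v)‖
          ≤ ‖D (q * v)‖ + ‖q‖ * ‖v‖ ^ 2 * ‖D (q ^ 2 * v)‖ :=
            (norm_add_le _ _).trans_eq (by rw [norm_mul, norm_mul, norm_pow])
        _ ≤ c * θ ^ n * (‖q‖ * ‖v‖) + ‖q‖ * ρ ^ 2 * (c * θ ^ n * (‖q‖ ^ 2 * ‖v‖)) := by
            gcongr
        _ = c * θ ^ n * ‖v‖ * (‖q‖ + ‖q‖ ^ 3 * ρ ^ 2) := by ring
        _ ≤ c * θ ^ n * ‖v‖ * θ := by gcongr; nlinarith [sq_nonneg ρ]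
        _ = c * θ ^ (n + 1) * ‖v‖ := by ring
  have htend : Tendsto (fun n : ℕ => c * θ ^ n * ‖w‖) atTop (𝓝 0) := by
    simpa using ((tendsto_pow_atTop_nhds_zero_of_lt_one (by positivity) hθ).const_mul c).mul_const
      ‖w‖
  exact norm_le_zero_iff.1 (ge_of_tendsto' htend fun n => key n w hw)

lemma eq_zero_of_eq_zero_on_closedBall_of_functional_eq (hq : ‖q‖ < 1)
    (hD : ∀ w, D w = D (q * w) + q * w ^ 2 * D (q ^ 2 * w)) {ρ : ℝ} (hρ : 0 < ρ)
    (h0 : ∀ w, ‖w‖ ≤ ρ → D w = 0) (z : ℂ) : D z = 0 := by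
  have key : ∀ N : ℕ, ∀ w : ℂ, ‖q‖ ^ N * ‖w‖ ≤ ρ → D w = 0 := by
    intro N
    induction N with
    | zero => simpa using h0
    | succ N ih =>
      intro w hw
      have hqw : ‖q‖ ^ N * ‖q * w‖ ≤ ρ := by rwa [norm_mul, ← mul_assoc, ← pow_succ]
      have hq2w : ‖q‖ ^ N * ‖q ^ 2 * w‖ ≤ ρ := by
        rw [norm_mul, norm_pow, ← mul_assoc, ← pow_add]
        exact (mul_le_mul_of_nonneg_right
          (pow_le_pow_of_le_one (norm_nonneg q) hq.le (by omega)) (norm_nonneg w)).trans hw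
      rw [hD w, ih _ hqw, ih _ hq2w, mul_zero, add_zero]
  obtain ⟨N, hN⟩ := (((tendsto_pow_atTop_nhds_zero_of_lt_one (norm_nonneg q) hq).mul_const
    ‖z‖).eventually_le_const (by simpa using hρ)).exists
  exact key N z hN

theorem eq_zero_of_functional_eq (hq : ‖q‖ < 1)
    (hD : ∀ w, D w = D (q * w) + q * w ^ 2 * D (q ^ 2 * w)) (hO : D =O[𝓝 0] fun w => w)
    (z : ℂ) : D z = 0 := by
  obtain ⟨c, hc, hcD⟩ := hO.exists_pos
  obtain ⟨ε, hε, hball⟩ := Metric.eventually_nhds_iff.1 hcD.bound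
  set ρ := min (ε / 2) ((1 - ‖q‖) / 2)
  have hρ : 0 < ρ := lt_min (by linarith) (by linarith)
  have hρε : ρ < ε := (min_le_left _ _).trans_lt (by linarith)
  have hθ : ‖q‖ + ρ ^ 2 < 1 := by
    have : ρ ^ 2 ≤ ((1 - ‖q‖) / 2) ^ 2 := pow_le_pow_left₀ hρ.le (min_le_right _ _) 2
    nlinarith [norm_nonneg q]
  refine eq_zero_of_eq_zero_on_closedBall_of_functional_eq hq hD hρ (fun w hw => ?_) z
  refine eq_zero_of_norm_le_of_functional_eq hD hc.le hθ (fun v hv => hball ?_) hw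
  rw [dist_zero_right]
  exact hv.trans_lt hρε

end FunctionalEquation

section TriangleTerms

variable {q : ℂ}

lemma norm_triangle_term_le (hq : ‖q‖ < 1) (w P : ℂ) (n : ℕ) :
    ‖q ^ (n * (n - 1) / 2) * w ^ n * P / qpC q q n‖ ≤
      ‖P‖ * ((‖w‖ * (1 - ‖q‖)⁻¹) ^ n * ‖q‖ ^ (n * (n - 1) / 2)) := by
  have h1q : 0 < 1 - ‖q‖ := by linarith
  have hP := pow_le_norm_qpC_self hq n
  rw [norm_div, div_le_iff₀ ((pow_pos h1q n).trans_le hP)]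
  calc ‖q ^ (n * (n - 1) / 2) * w ^ n * P‖
      = ‖P‖ * ((‖w‖ * (1 - ‖q‖)⁻¹) ^ n * ‖q‖ ^ (n * (n - 1) / 2)) * (1 - ‖q‖) ^ n := by
        rw [mul_pow, inv_pow]
        field_simp
        simp only [norm_mul, norm_pow]
        ring
    _ ≤ _ := by gcongr

lemma summable_triangle_term (hq : ‖q‖ < 1) (w : ℂ) {P : ℕ → ℂ} {C : ℝ} (hP : ∀ n, ‖P n‖ ≤ C) :
    Summable fun n => q ^ (n * (n - 1) / 2) * w ^ n * P n / qpC q q n := by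
  have h1q : 0 < 1 - ‖q‖ := by linarith
  refine .of_norm_bounded ((summable_pow_mul_pow_triangle (norm_nonneg q) hq
    (‖w‖ * (1 - ‖q‖)⁻¹)).mul_left C) fun n => (norm_triangle_term_le hq w (P n) n).trans ?_
  gcongr
  exact hP n

lemma norm_qpiC_mul_pow_le (hq : ‖q‖ < 1) (w : ℂ) (m : ℕ) :
    ‖qpiC q (w * q ^ m)‖ ≤ Real.exp (‖w‖ / (1 - ‖q‖)) := by
  have h1q : 0 < 1 - ‖q‖ := by linarith
  refine (norm_qpiC_le hq _).trans ?_
  gcongr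
  rw [norm_mul, norm_pow]
  exact mul_le_of_le_one_right (norm_nonneg w) (pow_le_one₀ (norm_nonneg q) hq.le)

end TriangleTerms

/-- The `n`-th term of `∑ₙ q^(n(n-1)/2) wⁿ (w q^(n+s); q)_∞ / (q; q)ₙ`: the series `G` of the
identity for `s = 0`, and the auxiliary series of its telescoping proof for `s = 1`. -/
noncomputable def rhsTerm (q w : ℂ) (s n : ℕ) : ℂ :=
  q ^ (n * (n - 1) / 2) * w ^ n * qpiC q (w * q ^ (n + s)) / qpC q q n

noncomputable def rhsSum (q w : ℂ) : ℂ := ∑' n, rhsTerm q w 0 n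

/-- The `k`-th term of `A_{q²}(-w²/q)`. -/
noncomputable def lhsTerm (q w : ℂ) (k : ℕ) : ℂ :=
  (q ^ 2) ^ (k ^ 2) * (w ^ 2 / q) ^ k / qpC (q ^ 2) (q ^ 2) k

noncomputable def lhsSum (q w : ℂ) : ℂ := ∑' k, lhsTerm q w k

section RhsSum

variable {q : ℂ}

lemma summable_rhsTerm (hq : ‖q‖ < 1) (w : ℂ) (s : ℕ) : Summable (rhsTerm q w s) :=
  summable_triangle_term hq w fun n => norm_qpiC_mul_pow_le hq w (n + s)

lemma rhsTerm_sub_sub (hq : ‖q‖ < 1) (w : ℂ) (n : ℕ) :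
    rhsTerm q w 0 n - rhsTerm q (q * w) 0 n - q * w ^ 2 * rhsTerm q (q ^ 2 * w) 0 n =
      (1 - q ^ n) * rhsTerm q w 1 n - (1 - q ^ (n + 1)) * rhsTerm q w 1 (n + 1) := by
  have hP := qpC_self_ne_zero hq (n + 1)
  rw [qpC_succ, mul_ne_zero_iff] at hP
  obtain ⟨hPn, hPlast⟩ := hP
  rw [← pow_succ'] at hPlast
  have hsplit : ∀ m, qpiC q (w * q ^ m) = (1 - w * q ^ m) * qpiC q (w * q ^ (m + 1)) := fun m => by
    rw [qpiC_eq_mul hq, mul_assoc, ← pow_succ]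
  simp only [rhsTerm, add_zero]
  rw [show q * w * q ^ n = w * q ^ (n + 1) by ring,
    show q ^ 2 * w * q ^ n = w * q ^ (n + 1 + 1) by ring, hsplit n, hsplit (n + 1),
    Nat.triangle_succ, qpC_succ, ← pow_succ']
  field_simp
  ring

lemma rhsSum_functional_eq (hq : ‖q‖ < 1) (w : ℂ) :
    rhsSum q w = rhsSum q (q * w) + q * w ^ 2 * rhsSum q (q ^ 2 * w) := by
  refine tsum_eq_tsum_add_mul_tsum_of_telescoping (a := fun n => (1 - q ^ n) * rhsTerm q w 1 n)
    (summable_rhsTerm hq w 0) (summable_rhsTerm hq _ 0) (summable_rhsTerm hq _ 0)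
    (rhsTerm_sub_sub hq w) (by simp) ?_
  simpa using ((tendsto_pow_atTop_nhds_zero_of_norm_lt_one hq).const_sub 1).mul
    (summable_rhsTerm hq w 1).tendsto_atTop_zero

lemma isBigO_rhsSum_sub_one (hq : ‖q‖ < 1) :
    (fun w => rhsSum q w - 1) =O[𝓝 0] fun w => w := by
  have h1q : 0 < 1 - ‖q‖ := by linarith
  have hbound : ∀ᶠ w in 𝓝 (0 : ℂ), ∀ n, ‖rhsTerm q w 0 n‖ ≤
      Real.exp (1 / (1 - ‖q‖)) * ((‖w‖ * (1 - ‖q‖)⁻¹) ^ n * ‖q‖ ^ (n * (n - 1) / 2)) := by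
    filter_upwards [Metric.closedBall_mem_nhds (0 : ℂ) one_pos] with w hw n
    rw [mem_closedBall_zero_iff] at hw
    refine (norm_triangle_term_le hq w _ n).trans ?_
    gcongr
    exact (norm_qpiC_mul_pow_le hq w _).trans (by gcongr)
  have hhead : ∀ w, rhsTerm q w 0 0 = qpiC q w := fun w => by simp [rhsTerm, qpC]
  refine ((isBigO_tsum_sub_term_zero (Real.exp_pos _).le (inv_nonneg.2 h1q.le) (norm_nonneg q) hq
    (fun w => summable_rhsTerm hq w 0) hbound).add (isBigO_qpiC_sub_one hq)).congr_left
    fun w => ?_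
  rw [hhead, rhsSum]
  ring

end RhsSum

section LhsSum

variable {q : ℂ}

lemma norm_lhsTerm_le (hq0 : q ≠ 0) (hq : ‖q‖ < 1) (w : ℂ) (k : ℕ) :
    ‖lhsTerm q w k‖ ≤ (‖w‖ ^ 2 * (1 - ‖q‖ ^ 2)⁻¹) ^ k * ‖q‖ ^ (k * (k - 1) / 2) := by
  have hq2 : ‖q ^ 2‖ < 1 := by rw [norm_pow]; exact pow_lt_one₀ (norm_nonneg q) hq two_ne_zero
  have h1q : 0 < 1 - ‖q‖ ^ 2 := by rw [norm_pow] at hq2; linarith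
  have hP : (1 - ‖q‖ ^ 2) ^ k ≤ ‖qpC (q ^ 2) (q ^ 2) k‖ := by
    simpa only [norm_pow] using pow_le_norm_qpC_self hq2 k
  have hexp : k * (k - 1) / 2 + k ≤ 2 * k ^ 2 := by
    have h1 := Nat.div_le_self (k * (k - 1)) 2
    have h2 : k * (k - 1) ≤ k ^ 2 := by rw [sq]; exact Nat.mul_le_mul_left k (Nat.sub_le k 1)
    have h3 : k ≤ k ^ 2 := Nat.le_self_pow two_ne_zero k
    omega
  have hqpow : ‖q‖ ^ (2 * k ^ 2) ≤ ‖q‖ ^ (k * (k - 1) / 2) * ‖q‖ ^ k := by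
    rw [← pow_add]; exact pow_le_pow_of_le_one (norm_nonneg q) hq.le hexp
  have hqk : 0 < ‖q‖ ^ k := pow_pos (norm_pos_iff.2 hq0) k
  rw [lhsTerm, norm_div, div_le_iff₀ ((pow_pos h1q k).trans_le hP)]
  calc ‖(q ^ 2) ^ (k ^ 2) * (w ^ 2 / q) ^ k‖ = ‖q‖ ^ (2 * k ^ 2) * (‖w‖ ^ 2) ^ k / ‖q‖ ^ k := by
        simp only [norm_mul, norm_pow, norm_div, div_pow, ← pow_mul]; ring
    _ ≤ ‖q‖ ^ (k * (k - 1) / 2) * ‖q‖ ^ k * (‖w‖ ^ 2) ^ k / ‖q‖ ^ k := by gcongr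
    _ = (‖w‖ ^ 2 * (1 - ‖q‖ ^ 2)⁻¹) ^ k * ‖q‖ ^ (k * (k - 1) / 2) * (1 - ‖q‖ ^ 2) ^ k := by
        rw [mul_pow, inv_pow]; field_simp
    _ ≤ _ := by gcongr

lemma summable_lhsTerm (hq0 : q ≠ 0) (hq : ‖q‖ < 1) (w : ℂ) : Summable (lhsTerm q w) :=
  .of_norm_bounded (summable_pow_mul_pow_triangle (norm_nonneg q) hq _) (norm_lhsTerm_le hq0 hq w)

lemma lhsTerm_succ_sub (hq0 : q ≠ 0) (hq : ‖q‖ < 1) (w : ℂ) (k : ℕ) :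
    lhsTerm q w (k + 1) - lhsTerm q (q * w) (k + 1) = q * w ^ 2 * lhsTerm q (q ^ 2 * w) k := by
  have hq2 : ‖q ^ 2‖ < 1 := by rw [norm_pow]; exact pow_lt_one₀ (norm_nonneg q) hq two_ne_zero
  have hP := qpC_self_ne_zero hq2 (k + 1)
  rw [qpC_succ, mul_ne_zero_iff] at hP
  obtain ⟨hPk, hPlast⟩ := hP
  have e1 : (q * w) ^ 2 / q = q ^ 2 * (w ^ 2 / q) := by field_simp
  have e2 : (q ^ 2 * w) ^ 2 / q = q ^ 4 * (w ^ 2 / q) := by field_simp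
  have e3 : q * w ^ 2 = q ^ 2 * (w ^ 2 / q) := by field_simp
  simp only [lhsTerm, qpC_succ]
  rw [e1, e2, e3]
  generalize w ^ 2 / q = x
  field_simp
  ring

lemma lhsSum_functional_eq (hq0 : q ≠ 0) (hq : ‖q‖ < 1) (w : ℂ) :
    lhsSum q w = lhsSum q (q * w) + q * w ^ 2 * lhsSum q (q ^ 2 * w) := by
  have hd := (summable_lhsTerm hq0 hq w).sub (summable_lhsTerm hq0 hq (q * w))
  refine tsum_eq_tsum_add_mul_tsum_of_telescoping (a := fun k => lhsTerm q w k - lhsTerm q (q * w) k)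
    (summable_lhsTerm hq0 hq w) (summable_lhsTerm hq0 hq _) (summable_lhsTerm hq0 hq _)
    (fun k => ?_) (by simp [lhsTerm]) hd.tendsto_atTop_zero
  rw [lhsTerm_succ_sub hq0 hq]

lemma isBigO_lhsSum_sub_one (hq0 : q ≠ 0) (hq : ‖q‖ < 1) :
    (fun w => lhsSum q w - 1) =O[𝓝 0] fun w => w := by
  have h1q : 0 ≤ (1 - ‖q‖ ^ 2)⁻¹ := inv_nonneg.2 (by nlinarith [norm_nonneg q])
  have hbound : ∀ᶠ w in 𝓝 (0 : ℂ), ∀ k, ‖lhsTerm q w k‖ ≤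
      1 * ((‖w‖ * (1 - ‖q‖ ^ 2)⁻¹) ^ k * ‖q‖ ^ (k * (k - 1) / 2)) := by
    filter_upwards [Metric.closedBall_mem_nhds (0 : ℂ) one_pos] with w hw k
    rw [mem_closedBall_zero_iff] at hw
    refine (norm_lhsTerm_le hq0 hq w k).trans ?_
    rw [one_mul]
    gcongr
    exact pow_le_of_le_one (norm_nonneg w) hw two_ne_zero
  refine (isBigO_tsum_sub_term_zero zero_le_one h1q (norm_nonneg q) hq
    (summable_lhsTerm hq0 hq) hbound).congr_left fun w => ?_
  simp [lhsSum, lhsTerm, qpC]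

end LhsSum

lemma rhsSum_eq_lhsSum {q : ℂ} (hq0 : q ≠ 0) (hq : ‖q‖ < 1) (w : ℂ) : rhsSum q w = lhsSum q w :=
  sub_eq_zero.1 <| eq_zero_of_functional_eq (D := fun v => rhsSum q v - lhsSum q v) hq
    (fun v => by rw [rhsSum_functional_eq hq, lhsSum_functional_eq hq0 hq]; ring)
    (((isBigO_rhsSum_sub_one hq).sub (isBigO_lhsSum_sub_one hq0 hq)).congr_left fun v => by ring) w

theorem Aq_qsquare_identity (q : ℝ) (hq0 : 0 < q) (hq1 : q < 1) (z : ℂ)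
    (hz : ∀ m : ℕ, z ≠ (q : ℂ) ^ (-(m : ℤ))) :
    Aq (q ^ 2) (-z ^ 2 / (q : ℂ)) =
      qpiC (q : ℂ) z *
        ∑' n : ℕ, (q : ℂ) ^ (n * (n - 1) / 2) * z ^ n /
          (qpC (q : ℂ) (q : ℂ) n * qpC (q : ℂ) z n) := by
  have hq : ‖(q : ℂ)‖ < 1 := by rwa [Complex.norm_real, Real.norm_of_nonneg hq0.le]
  have hqz : (q : ℂ) ≠ 0 := Complex.ofReal_ne_zero.2 hq0.ne'
  have hzq : ∀ k : ℕ, z * (q : ℂ) ^ k ≠ 1 := fun k h =>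
    hz k (by rw [zpow_neg, zpow_natCast]; exact eq_inv_of_mul_eq_one_left h)
  calc Aq (q ^ 2) (-z ^ 2 / (q : ℂ)) = lhsSum q z := by
        simp only [Aq, lhsSum, lhsTerm, Complex.ofReal_pow, neg_div, neg_neg]
    _ = rhsSum q z := (rhsSum_eq_lhsSum hqz hq z).symm
    _ = _ := by
        rw [rhsSum, ← tsum_mul_left]
        refine tsum_congr fun n => ?_
        rw [rhsTerm, add_zero, qpiC_eq_qpC_mul hq z n]
        field_simp [qpC_self_ne_zero hq n, qpC_ne_zero hzq n]
end

section
/- For 0 < q < 1 and every positive integer n, ∑_{k=0}^∞ q^{k(k+1)/2} A_q(q^{k-2n-1})/(q;q)_k = 0, where A_q(z) = ∑_{m=0}^∞ q^{m²}(-z)^m/(q;q)_m. -/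
noncomputable def qp (q a : ℝ) (n : ℕ) : ℝ := ∏ k ∈ Finset.range n, (1 - a * q ^ k)

noncomputable def AqR (q z : ℝ) : ℝ := ∑' k : ℕ, q ^ (k ^ 2) * (-z) ^ k / qp q q k

/-!
Expand `A_q(q^k r)` as a series in `m` and swap the two summations. By Euler's identity
`∑ₖ q^(k choose 2) tᵏ / (q;q)ₖ = (-t;q)_∞`, the sum over `k` collapses to
`(-q^(m+1);q)_∞ = (-q;q)_∞ / (-q;q)ₘ`, and since `(q;q)ₘ (-q;q)ₘ = (q²;q²)ₘ` what remains is
Euler's series in base `q²`, i.e. `(-q;q)_∞ (q r;q²)_∞`. For `r = q^(-2n-1)` the second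
factor contains `1 - q^(-2n) q^(2n) = 0`.
-/

open Filter Topology

lemma qp_succ (q a : ℝ) (n : ℕ) : qp q a (n + 1) = qp q a n * (1 - a * q ^ n) :=
  Finset.prod_range_succ _ _

lemma qp_mul_qp_neg (q a : ℝ) (n : ℕ) : qp q a n * qp q (-a) n = qp (q ^ 2) (a ^ 2) n := by
  simp only [qp, ← Finset.prod_mul_distrib]
  exact Finset.prod_congr rfl fun k _ => by ring

lemma qp_pos {q a : ℝ} (h : ∀ k, a * q ^ k < 1) (n : ℕ) : 0 < qp q a n :=
  Finset.prod_pos fun k _ => sub_pos.2 (h k)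

lemma qp_self_pos {q : ℝ} (hq0 : 0 ≤ q) (hq1 : q < 1) (n : ℕ) : 0 < qp q q n :=
  qp_pos (fun k => by rw [← pow_succ']; exact pow_lt_one₀ hq0 hq1 k.succ_ne_zero) n

lemma qp_neg_self_pos {q : ℝ} (hq0 : 0 ≤ q) (n : ℕ) : 0 < qp q (-q) n :=
  qp_pos (fun k => by nlinarith [pow_nonneg hq0 k]) n

lemma choose_two_succ (m : ℕ) : (m + 1).choose 2 = m.choose 2 + m := by
  rw [Nat.choose_succ_succ', Nat.choose_one_right, add_comm]

lemma sq_eq_two_mul_choose_two_add (m : ℕ) : m ^ 2 = 2 * m.choose 2 + m := by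
  induction m with
  | zero => rfl
  | succ m ih => rw [choose_two_succ]; nlinarith [ih]

lemma mul_succ_div_two_eq_choose_two (k : ℕ) : k * (k + 1) / 2 = (k + 1).choose 2 := by
  rw [Nat.choose_two_right, Nat.add_sub_cancel, Nat.mul_comm]

lemma summable_pow_mul_pow_div_qp {q : ℝ} (hq0 : 0 ≤ q) (hq1 : q < 1) {e : ℕ → ℕ}
    (he : ∀ k, e k + k ≤ e (k + 1)) (t : ℝ) :
    Summable fun k => q ^ e k * t ^ k / qp q q k := by
  set f := fun k => q ^ e k * t ^ k / qp q q k
  have hratio (k : ℕ) : ‖f (k + 1)‖ ≤ q ^ k * |t| / (1 - q) * ‖f k‖ := by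
    have hqp := qp_self_pos hq0 hq1 k
    have hpow : q ^ e (k + 1) ≤ q ^ e k * q ^ k := by
      rw [← pow_add]; exact pow_le_pow_of_le_one hq0 hq1.le (he k)
    have hfactor : 1 - q ≤ 1 - q * q ^ k := by
      nlinarith [pow_le_one₀ (n := k) hq0 hq1.le]
    have hnorm (j : ℕ) : ‖f j‖ = q ^ e j * |t| ^ j / qp q q j := by
      simp only [f, norm_div, norm_mul, norm_pow, Real.norm_eq_abs, abs_of_nonneg hq0,
        abs_of_pos (qp_self_pos hq0 hq1 j)]
    calc ‖f (k + 1)‖ = q ^ e (k + 1) * |t| ^ (k + 1) / (qp q q k * (1 - q * q ^ k)) := by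
          rw [hnorm, qp_succ]
      _ ≤ q ^ e k * q ^ k * |t| ^ (k + 1) / (qp q q k * (1 - q)) := by
          gcongr
      _ = q ^ k * |t| / (1 - q) * ‖f k‖ := by
          rw [hnorm]; field_simp; ring
  have hsmall : ∀ᶠ k in atTop, q ^ k * |t| / (1 - q) ≤ 1 / 2 := by
    have htend : Tendsto (fun k : ℕ => q ^ k * |t| / (1 - q)) atTop (𝓝 0) := by
      simpa using ((tendsto_pow_atTop_nhds_zero_of_lt_one hq0 hq1).mul_const |t|).div_const (1 - q)
    exact htend.eventually_le_const (by norm_num)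
  exact summable_of_ratio_norm_eventually_le (by norm_num : (1 / 2 : ℝ) < 1)
    (hsmall.mono fun k hk => (hratio k).trans (by gcongr))

/-- Euler's series `∑ q^(m choose 2) tᵐ / (q;q)ₘ = (-t;q)_∞`. -/
noncomputable def eulerSeries (q t : ℝ) : ℝ := ∑' m : ℕ, q ^ m.choose 2 * t ^ m / qp q q m

section eulerSeries

variable {q : ℝ} (hq0 : 0 ≤ q) (hq1 : q < 1)
include hq0 hq1

lemma summable_eulerSeries (t : ℝ) : Summable fun m => q ^ m.choose 2 * t ^ m / qp q q m :=
  summable_pow_mul_pow_div_qp hq0 hq1 (fun m => (choose_two_succ m).ge) t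

lemma eulerSeries_eq_one_add_mul (t : ℝ) : eulerSeries q t = (1 + t) * eulerSeries q (q * t) := by
  set g := fun m : ℕ =>
    q ^ m.choose 2 * t ^ m / qp q q m - q ^ m.choose 2 * (q * t) ^ m / qp q q m
  have hg : Summable g := (summable_eulerSeries hq0 hq1 t).sub (summable_eulerSeries hq0 hq1 _)
  have hg_succ (m : ℕ) : g (m + 1) = t * (q ^ m.choose 2 * (q * t) ^ m / qp q q m) := by
    have hqp := (qp_self_pos hq0 hq1 m).ne'
    have hfactor : 1 - q * q ^ m ≠ 0 := by
      rw [← pow_succ']; exact (sub_pos.2 (pow_lt_one₀ hq0 hq1 m.succ_ne_zero)).ne'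
    simp only [g, choose_two_succ, qp_succ]
    field_simp
    ring
  have hdiff : eulerSeries q t - eulerSeries q (q * t) = t * eulerSeries q (q * t) := by
    rw [eulerSeries, eulerSeries, ← (summable_eulerSeries hq0 hq1 t).tsum_sub
      (summable_eulerSeries hq0 hq1 _), hg.tsum_eq_zero_add, tsum_congr hg_succ, tsum_mul_left]
    simp [g]
  linear_combination hdiff

lemma qp_neg_mul_eulerSeries_pow (m : ℕ) :
    qp q (-q) m * eulerSeries q (q ^ (m + 1)) = eulerSeries q q := by
  induction m with
  | zero => simp [qp]
  | succ m ih =>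
    rw [← ih, eulerSeries_eq_one_add_mul hq0 hq1 (q ^ (m + 1)), ← pow_succ', qp_succ]
    ring

end eulerSeries

lemma eulerSeries_neg_inv_pow {q : ℝ} (hq0 : 0 < q) (hq1 : q < 1) (j : ℕ) :
    eulerSeries q (-(q ^ j)⁻¹) = 0 := by
  induction j with
  | zero => simpa using eulerSeries_eq_one_add_mul hq0.le hq1 (-1)
  | succ j ih =>
    rw [eulerSeries_eq_one_add_mul hq0.le hq1, pow_succ', mul_inv, mul_neg, ← mul_assoc,
      mul_inv_cancel₀ hq0.ne', one_mul, ih, mul_zero]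

theorem tsum_pow_mul_AqR_div_qp {q : ℝ} (hq0 : 0 ≤ q) (hq1 : q < 1) (r : ℝ) :
    ∑' k : ℕ, q ^ (k + 1).choose 2 * AqR q (q ^ k * r) / qp q q k
      = eulerSeries q q * eulerSeries (q ^ 2) (-(q * r)) := by
  set F : ℕ → ℕ → ℝ := fun k m =>
    q ^ (k + 1).choose 2 / qp q q k * (q ^ m ^ 2 * (-(q ^ k * r)) ^ m / qp q q m)
  have hrow (k : ℕ) : q ^ (k + 1).choose 2 * AqR q (q ^ k * r) / qp q q k = ∑' m, F k m := by
    rw [AqR, mul_div_right_comm, ← tsum_mul_left]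
  have hF : Summable (Function.uncurry F) := by
    have hqp := qp_self_pos hq0 hq1
    have ha := summable_eulerSeries hq0 hq1 q
    have hb := summable_pow_mul_pow_div_qp hq0 hq1 (e := (· ^ 2)) (fun m => by nlinarith) |r|
    refine (ha.mul_of_nonneg hb (fun k => ?_) (fun m => ?_)).of_norm_bounded fun ⟨k, m⟩ => ?_
    · exact div_nonneg (by positivity) (hqp k).le
    · exact div_nonneg (by positivity) (hqp m).le
    have hqkm : (q ^ k) ^ m ≤ 1 := pow_le_one₀ (by positivity) (pow_le_one₀ hq0 hq1.le)
    have hk := hqp k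
    have hm := hqp m
    calc ‖F k m‖
        = q ^ k.choose 2 * q ^ k / qp q q k * (q ^ m ^ 2 * ((q ^ k) ^ m * |r| ^ m) / qp q q m) := by
          simp only [F, norm_mul, norm_div, norm_pow, norm_neg, Real.norm_eq_abs, abs_of_nonneg hq0,
            abs_of_pos hk, abs_of_pos hm, choose_two_succ, pow_add, mul_pow]
      _ ≤ q ^ k.choose 2 * q ^ k / qp q q k * (q ^ m ^ 2 * (1 * |r| ^ m) / qp q q m) := by
          gcongr
      _ = _ := by rw [one_mul]
  have hcol (m : ℕ) : ∑' k, F k m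
      = eulerSeries q q * ((q ^ 2) ^ m.choose 2 * (-(q * r)) ^ m / qp (q ^ 2) (q ^ 2) m) := by
    have hF_eq (k : ℕ) : F k m = q ^ m ^ 2 * (-r) ^ m / qp q q m
        * (q ^ k.choose 2 * (q ^ (m + 1)) ^ k / qp q q k) := by
      simp only [F, choose_two_succ, neg_mul_eq_mul_neg, mul_pow, pow_add, ← pow_mul]
      ring
    have hE : eulerSeries q (q ^ (m + 1)) = eulerSeries q q / qp q (-q) m := by
      rw [eq_div_iff (qp_neg_self_pos hq0 m).ne', mul_comm, qp_neg_mul_eulerSeries_pow hq0 hq1]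
    rw [tsum_congr hF_eq, tsum_mul_left]
    change _ * eulerSeries q (q ^ (m + 1)) = _
    rw [hE, ← qp_mul_qp_neg, sq_eq_two_mul_choose_two_add, pow_add, pow_mul]
    field_simp
    ring
  rw [tsum_congr hrow, ← hF.tsum_comm, tsum_congr hcol, tsum_mul_left]
  rfl

theorem Aq_sum_odd_vanishes_general (q : ℝ) (hq0 : 0 < q) (hq1 : q < 1) (n : ℕ) :
    ∑' k : ℕ, q ^ (k * (k + 1) / 2) * AqR q (q ^ ((k : ℤ) - 2 * n - 1)) / qp q q k = 0 := by
  have hz (k : ℕ) : q ^ ((k : ℤ) - 2 * n - 1) = q ^ k * (q ^ (2 * n + 1))⁻¹ := by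
    rw [← zpow_natCast, ← zpow_natCast, ← zpow_neg, ← zpow_add₀ hq0.ne']
    congr 1
    push_cast
    ring
  have hqr : q * (q ^ (2 * n + 1))⁻¹ = ((q ^ 2) ^ n)⁻¹ := by
    rw [← pow_mul, pow_succ', mul_inv, ← mul_assoc, mul_inv_cancel₀ hq0.ne', one_mul]
  simp_rw [hz, mul_succ_div_two_eq_choose_two]
  rw [tsum_pow_mul_AqR_div_qp hq0.le hq1, hqr,
    eulerSeries_neg_inv_pow (by positivity) (pow_lt_one₀ hq0.le hq1 two_ne_zero), mul_zero]

theorem Aq_sum_odd_vanishes (q : ℝ) (hq0 : 0 < q) (hq1 : q < 1) (n : ℕ) (hn : 0 < n) :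
    ∑' k : ℕ, q ^ (k * (k + 1) / 2) * AqR q (q ^ ((k : ℤ) - 2 * n - 1)) / qp q q k = 0 :=
  Aq_sum_odd_vanishes_general q hq0 hq1 n
end
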